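/- Let k ≤ −1 be an integer, let f be as below, let U^0(k) = {γ ∈ ℝ^n : γ_i < 0 for all i, Σ_{i=1}^n γ_i > k}, and define g_k : U^0(k) → ℝ by g_k(γ) = (−k) · f(γ/(−k)). Then with F_j(r) = r_j²/(1 + Σ_{i=1}^n r_i²) one has the equality of subsets of ℝ^n × ℝ^n: {(∇g_k(γ), γ) : γ ∈ U^0(k)} = {((log r_1, …, log r_n), k·F(r)) : r ∈ (ℝ_{>0})^n}. (That is, the lift of the T-dual Lagrangian L(O(k), h_k) = {(r, k·F(r))} is the graph of the differential of a potential obtained from f by rescaling the domain by −k.) -/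

import Mathlib

open scoped BigOperators

/-- The open cell `T = {γ ∈ ℝⁿ : γᵢ < 0, ∑ γᵢ > −1}`. -/
def openCellT (n : ℕ) : Set (Fin n → ℝ) := {γ | (∀ i, γ i < 0) ∧ -1 < ∑ i, γ i}

/-- The potential `f` of the T-dual Lagrangian `L(O(−1), h_{−1})`. -/
noncomputable def potentialF (n : ℕ) (γ : Fin n → ℝ) : ℝ :=
  (1 / 2) * ∑ i, γ i * Real.log (-γ i)
    - (1 / 2) * (1 + ∑ j, γ j) * Real.log (1 + ∑ j, γ j)

/-- The moment map image of the torus orbit `L(r)`: `F_j(r) = r_j² / (1 + ∑ r_i²)`. -/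
noncomputable def momentOfOrbit (n : ℕ) (r : Fin n → ℝ) : Fin n → ℝ :=
  fun j => r j ^ 2 / (1 + ∑ i, r i ^ 2)

/-
On `T` the partial derivatives of `f` are `∂ᵢf(δ) = ½ log(-δᵢ / (1 + ∑ δⱼ))`, and for `c = -k`
the rescaling `g_k(γ) = c f(γ / c)` has `∇g_k(γ) = ∇f(γ / c)`. The moment map `F` sends
`(ℝ_{>0})ⁿ` onto `-T`, and `m = F(r)` is inverted by `rᵢ² = mᵢ / (1 - ∑ mⱼ)`. For `δ = γ / c = -F(r)`
this reads `rᵢ² = -δᵢ / (1 + ∑ δⱼ)`, and half its logarithm identifies `log rᵢ` with `∂ᵢg_k(γ)`.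
-/

open Finset Real

theorem fderiv_smul_comp_inv_smul {𝕜 E F : Type*} [NontriviallyNormedField 𝕜]
    [NormedAddCommGroup E] [NormedSpace 𝕜 E] [NormedAddCommGroup F] [NormedSpace 𝕜 F]
    (f : E → F) {c : 𝕜} (hc : c ≠ 0) (x : E) :
    fderiv 𝕜 (fun y => c • f (c⁻¹ • y)) x = fderiv 𝕜 f (c⁻¹ • x) := by
  change fderiv 𝕜 (c • fun y => f (c⁻¹ • y)) x = _
  rw [fderiv_const_smul_field, Pi.smul_apply, fderiv_comp_smul, smul_smul, mul_inv_cancel₀ hc,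
    one_smul]

theorem ContinuousLinearMap.sum_smul_proj_apply_single {ι : Type*} [Fintype ι] [DecidableEq ι]
    (a : ι → ℝ) (i : ι) :
    (∑ j, a j • (proj j : (ι → ℝ) →L[ℝ] ℝ)) (Pi.single i 1) = a i := by
  simp [Pi.single_apply]

theorem hasFDerivAt_sum_apply_sub_comp_sum {ι : Type*} [Fintype ι] {φ : ι → ℝ → ℝ}
    {φ' : ι → ℝ} {ψ : ℝ → ℝ} {ψ' : ℝ} {x : ι → ℝ} (hφ : ∀ i, HasDerivAt (φ i) (φ' i) (x i))
    (hψ : HasDerivAt ψ ψ' (∑ i, x i)) :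
    HasFDerivAt (fun y => ∑ i, φ i (y i) - ψ (∑ i, y i))
      (∑ i, (φ' i - ψ') • (ContinuousLinearMap.proj i : (ι → ℝ) →L[ℝ] ℝ)) x := by
  have hsum : HasFDerivAt (fun y : ι → ℝ => ∑ i, y i)
      (∑ i, (ContinuousLinearMap.proj i : (ι → ℝ) →L[ℝ] ℝ)) x :=
    HasFDerivAt.fun_sum fun i _ => hasFDerivAt_apply i x
  refine ((HasFDerivAt.fun_sum (u := univ) fun i _ =>
    (hφ i).comp_hasFDerivAt x (hasFDerivAt_apply i x)).fun_sub
    (hψ.comp_hasFDerivAt x hsum)).congr_fderiv ?_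
  rw [smul_sum, ← sum_sub_distrib]
  exact sum_congr rfl fun i _ => (sub_smul _ _ _).symm

theorem hasFDerivAt_potentialF {n : ℕ} {γ : Fin n → ℝ} (hγ : ∀ i, γ i ≠ 0)
    (hS : 1 + ∑ i, γ i ≠ 0) :
    HasFDerivAt (potentialF n)
      (∑ i, (log (-γ i / (1 + ∑ j, γ j)) / 2) •
        (ContinuousLinearMap.proj i : (Fin n → ℝ) →L[ℝ] ℝ)) γ := by
  have hφ : ∀ i, HasDerivAt (fun x => x * log x / 2) ((log (γ i) + 1) / 2) (γ i) :=
    fun i => (hasDerivAt_mul_log (hγ i)).div_const 2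
  have hψ : HasDerivAt (fun s => (1 + s) * log (1 + s) / 2) ((log (1 + ∑ i, γ i) + 1) / 2)
      (∑ i, γ i) := by
    simpa using ((hasDerivAt_mul_log hS).comp _ ((hasDerivAt_id _).const_add 1)).div_const 2
  convert hasFDerivAt_sum_apply_sub_comp_sum hφ hψ using 1
  · ext γ
    simp only [potentialF, log_neg_eq_log, ← sum_div]
    ring
  · refine sum_congr rfl fun i _ => ?_
    rw [log_div (neg_ne_zero.2 (hγ i)) hS, log_neg_eq_log]
    congr 1
    ring

theorem fderiv_potentialF_single {n : ℕ} {γ : Fin n → ℝ} (hγ : ∀ i, γ i ≠ 0)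
    (hS : 1 + ∑ i, γ i ≠ 0) (i : Fin n) :
    fderiv ℝ (potentialF n) γ (Pi.single i 1) = log (-γ i / (1 + ∑ j, γ j)) / 2 := by
  rw [(hasFDerivAt_potentialF hγ hS).fderiv, ContinuousLinearMap.sum_smul_proj_apply_single]

theorem inv_smul_mem_openCellT_iff {n : ℕ} {c : ℝ} (hc : 0 < c) {γ : Fin n → ℝ} :
    c⁻¹ • γ ∈ openCellT n ↔ (∀ i, γ i < 0) ∧ -c < ∑ i, γ i := by
  simp only [openCellT, Set.mem_ofPred_eq, Pi.smul_apply, smul_eq_mul, ← mul_sum]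
  simp only [← div_eq_inv_mul, div_lt_iff₀ hc, lt_div_iff₀ hc, zero_mul, neg_one_mul]

theorem one_sub_sum_momentOfOrbit (n : ℕ) (r : Fin n → ℝ) :
    1 - ∑ j, momentOfOrbit n r j = (1 + ∑ i, r i ^ 2)⁻¹ := by
  have h : 0 < 1 + ∑ i, r i ^ 2 := by positivity
  simp only [momentOfOrbit, ← sum_div]
  field_simp
  ring

theorem momentOfOrbit_div_one_sub_sum (n : ℕ) (r : Fin n → ℝ) (i : Fin n) :
    momentOfOrbit n r i / (1 - ∑ j, momentOfOrbit n r j) = r i ^ 2 := by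
  have h : 0 < 1 + ∑ i, r i ^ 2 := by positivity
  rw [one_sub_sum_momentOfOrbit, momentOfOrbit]
  field_simp

theorem neg_momentOfOrbit_mem_openCellT {n : ℕ} {r : Fin n → ℝ} (hr : ∀ i, r i ≠ 0) :
    -momentOfOrbit n r ∈ openCellT n := by
  have h : 0 < 1 + ∑ i, r i ^ 2 := by positivity
  refine ⟨fun i => neg_neg_of_pos (div_pos (sq_pos_of_ne_zero (hr i)) h), ?_⟩
  have := one_sub_sum_momentOfOrbit n r
  simp only [Pi.neg_apply, sum_neg_distrib, neg_lt_neg_iff]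
  linarith [inv_pos.2 h]

theorem momentOfOrbit_eq_neg {n : ℕ} {r δ : Fin n → ℝ} (hδ : -1 < ∑ i, δ i)
    (hr : ∀ i, r i ^ 2 = -δ i / (1 + ∑ j, δ j)) : momentOfOrbit n r = -δ := by
  have hS : 0 < 1 + ∑ j, δ j := by linarith
  have hsum : 1 + ∑ i, r i ^ 2 = (1 + ∑ j, δ j)⁻¹ := by
    simp only [hr, ← sum_div, sum_neg_distrib]
    field_simp
    ring
  ext i
  rw [momentOfOrbit, hsum, hr, Pi.neg_apply]
  field_simp

theorem gradient_graph_eq_neg_smul_momentOfOrbit (n : ℕ) {c : ℝ} (hc : 0 < c) :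
    {p : (Fin n → ℝ) × (Fin n → ℝ) | ∃ γ, ((∀ i, γ i < 0) ∧ -c < ∑ i, γ i) ∧
        p = (fun i => fderiv ℝ (fun γ => c • potentialF n (c⁻¹ • γ)) γ (Pi.single i 1), γ)} =
      {p | ∃ r : Fin n → ℝ, (∀ i, 0 < r i) ∧ p = (fun i => log (r i), -c • momentOfOrbit n r)} := by
  have hgrad : ∀ γ, c⁻¹ • γ ∈ openCellT n → ∀ i,
      fderiv ℝ (fun γ => c • potentialF n (c⁻¹ • γ)) γ (Pi.single i 1) =
        log (-(c⁻¹ • γ) i / (1 + ∑ j, (c⁻¹ • γ) j)) / 2 := fun γ hγ i => by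
    rw [fderiv_smul_comp_inv_smul _ hc.ne', fderiv_potentialF_single (fun j => (hγ.1 j).ne)
      (by linarith [hγ.2])]
  ext p
  simp only [Set.mem_ofPred_eq, ← inv_smul_mem_openCellT_iff hc]
  constructor
  · rintro ⟨γ, hγ, rfl⟩
    have hS : 0 < 1 + ∑ j, (c⁻¹ • γ) j := by linarith [hγ.2]
    have hpos : ∀ i, 0 < -(c⁻¹ • γ) i / (1 + ∑ j, (c⁻¹ • γ) j) :=
      fun i => div_pos (neg_pos.2 (hγ.1 i)) hS
    refine ⟨fun i => √(-(c⁻¹ • γ) i / (1 + ∑ j, (c⁻¹ • γ) j)), fun i => sqrt_pos.2 (hpos i),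
      Prod.ext (funext fun i => ?_) ?_⟩
    · dsimp only
      rw [hgrad γ hγ, log_sqrt (hpos i).le]
    · rw [momentOfOrbit_eq_neg hγ.2 fun i => sq_sqrt (hpos i).le, smul_neg, neg_smul, neg_neg,
        smul_inv_smul₀ hc.ne']
  · rintro ⟨r, hr, rfl⟩
    have hF : c⁻¹ • (-c • momentOfOrbit n r) ∈ openCellT n := by
      rw [neg_smul, ← smul_neg, inv_smul_smul₀ hc.ne']
      exact neg_momentOfOrbit_mem_openCellT fun i => (hr i).ne'
    refine ⟨_, hF, Prod.ext (funext fun i => ?_) rfl⟩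
    dsimp only
    rw [hgrad _ hF, neg_smul, ← smul_neg, inv_smul_smul₀ hc.ne']
    simp only [Pi.neg_apply, neg_neg, sum_neg_distrib, ← sub_eq_add_neg,
      momentOfOrbit_div_one_sub_sum, log_pow]
    push_cast
    ring

theorem stmt_7_general (n : ℕ) (k : ℤ) (hk : k ≤ -1)
    -- the open cell `U⁰(k) = {γ : γᵢ < 0, ∑ γᵢ > k}`
    (U : Set (Fin n → ℝ)) (hU : U = {γ | (∀ i, γ i < 0) ∧ (k : ℝ) < ∑ i, γ i})
    -- the rescaled potential `g_k(γ) = (−k) · f(γ/(−k))`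
    (g : (Fin n → ℝ) → ℝ)
    (hg : ∀ γ, g γ = (-(k : ℝ)) * potentialF n (fun i => γ i / (-(k : ℝ)))) :
    {p : (Fin n → ℝ) × (Fin n → ℝ) | ∃ γ ∈ U,
        p = (fun i => fderiv ℝ g γ (Pi.single i 1), γ)} =
      {p : (Fin n → ℝ) × (Fin n → ℝ) | ∃ r : Fin n → ℝ, (∀ i, 0 < r i) ∧
        p = (fun i => Real.log (r i), fun j => (k : ℝ) * momentOfOrbit n r j)} := by
  obtain ⟨c, hc, hkc⟩ : ∃ c : ℝ, 0 < c ∧ (k : ℝ) = -c :=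
    ⟨-k, by linarith [show (k : ℝ) ≤ -1 by exact_mod_cast hk], (neg_neg _).symm⟩
  have hg' : g = fun γ => c • potentialF n (c⁻¹ • γ) := funext fun γ => by
    simp only [hg, hkc, neg_neg, smul_eq_mul, Pi.smul_def, div_eq_inv_mul]
  subst hU hg'
  rw [hkc]
  exact gradient_graph_eq_neg_smul_momentOfOrbit n hc

theorem stmt_7 (n : ℕ) (hn : 1 ≤ n) (k : ℤ) (hk : k ≤ -1)
    -- the open cell `U⁰(k) = {γ : γᵢ < 0, ∑ γᵢ > k}`
    (U : Set (Fin n → ℝ)) (hU : U = {γ | (∀ i, γ i < 0) ∧ (k : ℝ) < ∑ i, γ i})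
    -- the rescaled potential `g_k(γ) = (−k) · f(γ/(−k))`
    (g : (Fin n → ℝ) → ℝ)
    (hg : ∀ γ, g γ = (-(k : ℝ)) * potentialF n (fun i => γ i / (-(k : ℝ)))) :
    {p : (Fin n → ℝ) × (Fin n → ℝ) | ∃ γ ∈ U,
        p = (fun i => fderiv ℝ g γ (Pi.single i 1), γ)} =
      {p : (Fin n → ℝ) × (Fin n → ℝ) | ∃ r : Fin n → ℝ, (∀ i, 0 < r i) ∧
        p = (fun i => Real.log (r i), fun j => (k : ℝ) * momentOfOrbit n r j)} :=
  stmt_7_general n k hk U hU g hg
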